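/- For every p ∈ Δ(Ω), v_∞(p) = inf{ g(p) : g ∈ G }, where G is the set of all functions g: Δ(Ω) → ℝ such that g ≥ v pointwise and g(σ(e)) ≥ Σ_{j∈[m]} λ_j g(p_j) for every experiment e = (λ_j, p_j)_{j∈[m]} ∈ F. -/

import Mathlib

open Filter Topology
open scoped Classical

noncomputable section

/-- Δ(Ω): beliefs, i.e. probability distributions on the finite state space Ω,
as a subspace of Ω → ℝ (its topology agrees with the total-variation one). -/
abbrev Belief (Ω : Type*) [Fintype Ω] :=
  {p : Ω → ℝ // (∀ ω, 0 ≤ p ω) ∧ ∑ ω, p ω = 1}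

variable {Ω : Type*} [Fintype Ω]

/-- An element of F₀: a finite-support experiment, i.e. a finitely supported probability
distribution over beliefs (keys are the distinct posteriors p_j, values the positive
weights λ_j). -/
structure SPExp (Ω : Type*) [Fintype Ω] where
  w : Belief Ω →₀ ℝ
  nonneg : ∀ p, 0 ≤ w p
  sum_one : ∑ p ∈ w.support, w p = 1

namespace SPExp

/-- τ(e): the support of an experiment. -/
def tau (e : SPExp Ω) : Finset (Belief Ω) := e.w.support

/-- Expectation of a real-valued function under an experiment. -/
def expect (e : SPExp Ω) (f : Belief Ω → ℝ) : ℝ := ∑ p ∈ e.w.support, e.w p * f p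

/-- σ(e): the barycenter (expectation) of an experiment. -/
def sigma (e : SPExp Ω) : Belief Ω :=
  ⟨fun ω => ∑ p ∈ e.w.support, e.w p * p.val ω,
   fun ω => Finset.sum_nonneg fun p _ => mul_nonneg (e.nonneg p) (p.2.1 ω),
   by
     calc ∑ ω, ∑ p ∈ e.w.support, e.w p * p.val ω
         = ∑ p ∈ e.w.support, ∑ ω, e.w p * p.val ω := Finset.sum_comm
       _ = ∑ p ∈ e.w.support, e.w p * ∑ ω, p.val ω := by
           refine Finset.sum_congr rfl fun p _ => ?_
           rw [Finset.mul_sum]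
       _ = ∑ p ∈ e.w.support, e.w p := by
           refine Finset.sum_congr rfl fun p _ => ?_
           rw [p.2.2, mul_one]
       _ = 1 := e.sum_one⟩

/-- The trivial experiment (1, p). -/
def triv (p : Belief Ω) : SPExp Ω where
  w := Finsupp.single p 1
  nonneg := fun q => by
    rw [Finsupp.single_apply]
    split <;> norm_num
  sum_one := by
    rw [Finsupp.support_single_ne_zero _ one_ne_zero]
    simp

end SPExp

/-- T: the set of trivial experiments. -/
def Trivials (Ω : Type*) [Fintype Ω] : Set (SPExp Ω) := Set.range SPExp.triv

/-- Weak convergence of experiments, viewed as Borel probability measures on Δ(Ω). -/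
def WeakTendsto (es : ℕ → SPExp Ω) (e : SPExp Ω) : Prop :=
  ∀ f : Belief Ω → ℝ, Continuous f →
    Tendsto (fun i => (es i).expect f) atTop (𝓝 (e.expect f))

/-- Convergence of beliefs in total variation. -/
def TVTendsto (ps : ℕ → Belief Ω) (p : Belief Ω) : Prop :=
  Tendsto (fun i => ∑ ω, |(ps i).val ω - p.val ω|) atTop (𝓝 0)

/-- Histories, most recent step first: entries are (experiment taken, realized posterior);
the starting belief is kept separately. -/
abbrev Hist (Ω : Type*) [Fintype Ω] := List (SPExp Ω × Belief Ω)

/-- last(ξ): the current belief after history ξ started at μ. -/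
def lastBelief (μ : Belief Ω) : Hist Ω → Belief Ω
  | [] => μ
  | (_, p) :: _ => p

/-- Pr[ξ]: the probability of a history. -/
def histProb : Hist Ω → ℝ
  | [] => 1
  | (e, p) :: ξ => e.w p * histProb ξ

/-- A sequential persuasion starting from μ with feasible experiments F, given by its
history-dependent choice of the next (feasible, Bayes-plausible) experiment.  An n-step
sequential persuasion is such a strategy used for n steps; an infinite sequential
persuasion is the strategy itself. -/
structure SeqP {Ω : Type*} [Fintype Ω] (F : Set (SPExp Ω)) (μ : Belief Ω) where
  next : Hist Ω → SPExp Ω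
  feasible : ∀ ξ, next ξ ∈ F
  bayes : ∀ ξ, (next ξ).sigma = lastBelief μ ξ

variable {F : Set (SPExp Ω)} {μ : Belief Ω}

/-- Expectation of g over the n-step histories of S extending ξ. -/
def histExp (S : SeqP F μ) (g : Hist Ω → ℝ) : ℕ → Hist Ω → ℝ
  | 0, ξ => g ξ
  | n + 1, ξ => (S.next ξ).expect fun p => histExp S g n ((S.next ξ, p) :: ξ)

/-- Ξ_n: the set of n-step histories of S. -/
def Hists (S : SeqP F μ) : ℕ → Set (Hist Ω)
  | 0 => {[]}
  | n + 1 => {ξ' | ∃ ξ ∈ Hists S n, ∃ p ∈ (S.next ξ).tau, ξ' = (S.next ξ, p) :: ξ}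

/-- ξ padded by l trivial steps. -/
def padHist (μ : Belief Ω) (ξ : Hist Ω) (l : ℕ) : Hist Ω :=
  List.replicate l (SPExp.triv (lastBelief μ ξ), lastBelief μ ξ) ++ ξ

/-- S terminates after ξ: all subsequent choices (along trivial continuations of ξ)
are the trivial experiment. -/
def TerminatesAfter (S : SeqP F μ) (ξ : Hist Ω) : Prop :=
  ∀ l : ℕ, S.next (padHist μ ξ l) = SPExp.triv (lastBelief μ ξ)

/-- 𝒱(S⁽ⁿ⁾) = E[v(b_n)], the expected utility of the n-step persuasion given by the
first n steps of S. -/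
def stepUtility (v : Belief Ω → ℝ) (S : SeqP F μ) (n : ℕ) : ℝ :=
  histExp S (fun ξ => v (lastBelief μ ξ)) n []

/-- Pr[S terminates after n steps]. -/
def termProb (S : SeqP F μ) (n : ℕ) : ℝ :=
  histExp S (fun ξ => if TerminatesAfter S ξ then 1 else 0) n []

/-- 𝒱(S) for an infinite sequential persuasion S. -/
def infUtility (v : Belief Ω → ℝ) (S : SeqP F μ) : ℝ :=
  ⨆ n : ℕ, histExp S (fun ξ => if TerminatesAfter S ξ then v (lastBelief μ ξ) else 0) n []

/-- Pr[b_n ∈ O] for the belief b_n induced by S after n steps. -/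
def massIn (S : SeqP F μ) (O : Set (Belief Ω)) (n : ℕ) : ℝ :=
  histExp S (fun ξ => if lastBelief μ ξ ∈ O then 1 else 0) n []

/-- v_n(p): the optimal value over n-step sequential persuasions starting from p. -/
def vN (F : Set (SPExp Ω)) (v : Belief Ω → ℝ) (n : ℕ) (p : Belief Ω) : ℝ :=
  ⨆ S : SeqP F p, stepUtility v S n

/-- v_∞(p): the optimal value over infinite sequential persuasions starting from p. -/
def vInf (F : Set (SPExp Ω)) (v : Belief Ω → ℝ) (p : Belief Ω) : ℝ :=
  ⨆ S : SeqP F p, infUtility v S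

/-- Assumption 1: a uniform support bound h, and weak closedness of F. -/
def Assumption1 (F : Set (SPExp Ω)) (h : ℕ) : Prop :=
  (∀ e ∈ F, e.tau.card ≤ h) ∧
  ∀ es : ℕ → SPExp Ω, (∀ i, es i ∈ F) → ∀ e : SPExp Ω, WeakTendsto es e → e ∈ F

/-- Shannon entropy of a belief. -/
def entropy (p : Belief Ω) : ℝ := -∑ ω, p.val ω * Real.log (p.val ω)

/-- Assumption 2: every nontrivial feasible experiment lowers expected entropy by δ. -/
def Assumption2 (F : Set (SPExp Ω)) (δ : ℝ) : Prop :=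
  ∀ e ∈ F \ Trivials Ω, e.expect entropy ≤ entropy e.sigma - δ

/-- S is (effectively) an n-step sequential persuasion: after n steps it only takes
trivial experiments. -/
def IsNStep (S : SeqP F μ) (n : ℕ) : Prop :=
  ∀ ξ : Hist Ω, n ≤ ξ.length → S.next ξ = SPExp.triv (lastBelief μ ξ)

/-- Assumption 3 at prior μ: a sequence of finite-step sequential persuasions whose
values tend to v_∞(μ) and which terminate at a uniform rate. -/
def Assumption3 (F : Set (SPExp Ω)) (v : Belief Ω → ℝ) (μ : Belief Ω) : Prop :=
  ∃ (nk : ℕ → ℕ) (Sk : ℕ → SeqP F μ),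
    (∀ k, IsNStep (Sk k) (nk k)) ∧
    Tendsto (fun k => stepUtility v (Sk k) (nk k)) atTop (𝓝 (vInf F v μ)) ∧
    ∀ ε : ℝ, 0 < ε → ∃ N : ℕ, ∀ k, N ≤ nk k → 1 - ε ≤ termProb (Sk k) N

/-- v̂: the concave closure of v (the value of unconstrained Bayesian persuasion). -/
def concaveClosure (v : Belief Ω → ℝ) (p : Belief Ω) : ℝ :=
  sSup {x : ℝ | ∃ e : SPExp Ω, e.sigma = p ∧ x = e.expect v}

/-- O is implementable for (μ, F). -/
def Implementable (F : Set (SPExp Ω)) (μ : Belief Ω) (O : Set (Belief Ω)) : Prop :=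
  ∀ ε : ℝ, 0 < ε → ∃ (n : ℕ) (S : SeqP F μ), 1 - ε < massIn S O n

/-- S is a Markov sequential persuasion compatible with (μ, D, Z, ρ). -/
def MarkovCompatible (S : SeqP F μ) (D Z : Set (Belief Ω)) (ρ : Belief Ω → SPExp Ω) : Prop :=
  ∀ ξ : Hist Ω,
    (lastBelief μ ξ ∈ D → S.next ξ = ρ (lastBelief μ ξ)) ∧
    (lastBelief μ ξ ∈ Z → S.next ξ = SPExp.triv (lastBelief μ ξ))

/-- The j-th child of vertex m at depth n of the infinite h-ary tree. -/
def treeChild {h n : ℕ} (m : Fin (h ^ n)) (j : Fin h) : Fin (h ^ (n + 1)) :=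
  ⟨m.val * h + j.val, by
    have h1 : m.val + 1 ≤ h ^ n := m.isLt
    have h2 : j.val < h := j.isLt
    calc m.val * h + j.val < m.val * h + h := by omega
      _ = (m.val + 1) * h := by ring
      _ ≤ h ^ n * h := Nat.mul_le_mul h1 le_rfl
      _ = h ^ (n + 1) := (pow_succ h n).symm⟩

/-- An h-branching sequential persuasion starting from μ. -/
structure HBranch (Ω : Type*) [Fintype Ω] (F : Set (SPExp Ω)) (h : ℕ) (μ : Belief Ω) where
  π : ∀ n : ℕ, Fin (h ^ n) → ℝ
  β : ∀ n : ℕ, Fin (h ^ n) → Belief Ω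
  η : ∀ n : ℕ, Fin (h ^ n) → SPExp Ω
  π_nonneg : ∀ n m, 0 ≤ π n m
  π_sum : ∀ n : ℕ, ∑ m, π n m = 1
  η_mem : ∀ n m, η n m ∈ F
  β_root : ∀ m, β 0 m = μ
  compat_sigma : ∀ n m, (η n m).sigma = β n m
  compat_tau : ∀ (n : ℕ) (m : Fin (h ^ n)), ∀ p ∈ (η n m).tau,
    ∃ j : Fin h, β (n + 1) (treeChild m j) = p
  consistent : ∀ (n : ℕ) (m : Fin (h ^ n)) (p : Belief Ω),
    (∑ j : Fin h, if β (n + 1) (treeChild m j) = p then π (n + 1) (treeChild m j) else 0)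
      = π n m * (η n m).w p

/-- c' (at depth n + l) is a descendant of c (at depth n) in the h-ary tree. -/
def Descendant {h : ℕ} : {n : ℕ} → (l : ℕ) → Fin (h ^ n) → Fin (h ^ (n + l)) → Prop
  | _, 0, c, c' => c = c'
  | _, l + 1, c, c' => ∃ c'' j, Descendant l c c'' ∧ c' = treeChild c'' j

namespace HBranch

variable {h : ℕ}

/-- B terminates after vertex m at depth n. -/
def TermAfter (B : HBranch Ω F h μ) (n : ℕ) (m : Fin (h ^ n)) : Prop :=
  B.η n m ∈ Trivials Ω ∧
  ∀ (l : ℕ) (c' : Fin (h ^ (n + l))), Descendant l m c' → 0 < B.π (n + l) c' →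
    B.η (n + l) c' ∈ Trivials Ω

/-- Pr[B terminates after n steps]. -/
def termProb (B : HBranch Ω F h μ) (n : ℕ) : ℝ :=
  ∑ m : Fin (h ^ n), if B.TermAfter n m then B.π n m else 0

end HBranch

/-- B represents the infinite sequential persuasion S (via maps r_n : C_n → Ξ_n). -/
def Represents (S : SeqP F μ) {h : ℕ} (B : HBranch Ω F h μ) : Prop :=
  ∃ r : ∀ n : ℕ, Fin (h ^ n) → Hist Ω,
    ∀ n : ℕ,
      (∀ c, r n c ∈ Hists S n) ∧
      (∀ ξ ∈ Hists S n, histProb ξ = ∑ c, if r n c = ξ then B.π n c else 0) ∧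
      (∀ c, lastBelief μ (r n c) = B.β n c ∧ S.next (r n c) = B.η n c) ∧
      (∀ l : ℕ, ∀ ξ ∈ Hists S n, ∀ ξ' ∈ Hists S (n + l),
        (ξ <:+ ξ' ↔
          ∀ c' : Fin (h ^ (n + l)), r (n + l) c' = ξ' →
            ∃ c : Fin (h ^ n), r n c = ξ ∧ Descendant l c c'))

/-- The number of nontrivial experiments taken along a history. -/
def nontrivCount (ξ : Hist Ω) : ℕ :=
  ξ.countP fun s => decide (s.1 ∉ Trivials Ω)

end

/-!
The value function `vInf F v` is itself a member of `G`: stopping at once shows `v ≤ vInf`, and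
it is superharmonic because after any feasible `e` one may continue from each posterior with a
nearly optimal persuasion, and the value of the composite is the `e`-average of those values.
Conversely, for `g ∈ G` the process `g(b_n)` is a supermartingale along every persuasion, while
the payoff collected by time `n` is at most `v(b_n) ≤ g(b_n)` (it is `0` unless `S` has
terminated, and `v ≥ 0`), so every persuasion from `p` is worth at most `g p`.
-/

noncomputable section

namespace SPExp

variable {Ω : Type*} [Fintype Ω]

theorem expect_mono (e : SPExp Ω) {f g : Belief Ω → ℝ} (h : ∀ p, f p ≤ g p) :
    e.expect f ≤ e.expect g :=
  Finset.sum_le_sum fun p _ => mul_le_mul_of_nonneg_left (h p) (e.nonneg p)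

theorem expect_add_const (e : SPExp Ω) (f : Belief Ω → ℝ) (c : ℝ) :
    e.expect (fun p => f p + c) = e.expect f + c := by
  simp only [expect, mul_add, Finset.sum_add_distrib, ← Finset.sum_mul, e.sum_one, one_mul]

theorem expect_const (e : SPExp Ω) (c : ℝ) : e.expect (fun _ => c) = c := by
  rw [expect, ← Finset.sum_mul, e.sum_one, one_mul]

theorem expect_nonneg (e : SPExp Ω) {f : Belief Ω → ℝ} (h : ∀ p, 0 ≤ f p) :
    0 ≤ e.expect f :=
  (e.expect_const 0).symm.trans_le (e.expect_mono h)

theorem expect_triv (q : Belief Ω) (f : Belief Ω → ℝ) : (triv q).expect f = f q := by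
  simp [expect, triv]

theorem sigma_triv (q : Belief Ω) : (triv q).sigma = q := by
  ext ω
  simp [sigma, triv]

theorem expect_ciSup (e : SPExp Ω) {a : Belief Ω → ℕ → ℝ}
    (hmono : ∀ p, Monotone (a p)) (hbdd : ∀ p, BddAbove (Set.range (a p))) :
    e.expect (fun p => ⨆ n, a p n) = ⨆ n, e.expect fun p => a p n := by
  have hlim : Tendsto (fun n => e.expect fun p => a p n) atTop
      (𝓝 (e.expect fun p => ⨆ n, a p n)) :=
    tendsto_finsetSum _ fun p _ => (tendsto_atTop_ciSup (hmono p) (hbdd p)).const_mul _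
  exact ((isLUB_of_tendsto_atTop (fun m n hmn => e.expect_mono fun p => hmono p hmn)
    hlim).ciSup_eq).symm

end SPExp

section Histories

variable {Ω : Type*} [Fintype Ω]

theorem lastBelief_cons (μ : Belief Ω) (x : SPExp Ω × Belief Ω) (ξ : Hist Ω) :
    lastBelief μ (x :: ξ) = x.2 := rfl

theorem lastBelief_append_singleton (μ p : Belief Ω) (e : SPExp Ω) (ξ : Hist Ω) :
    lastBelief μ (ξ ++ [(e, p)]) = lastBelief p ξ := by
  cases ξ <;> rfl

theorem lastBelief_dropLast (μ : Belief Ω) {ξ : Hist Ω} (h : ξ ≠ []) :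
    lastBelief (ξ.getLast h).2 ξ.dropLast = lastBelief μ ξ := by
  conv_rhs => rw [← List.dropLast_append_getLast h]
  exact (lastBelief_append_singleton μ _ _ _).symm

theorem padHist_succ (μ : Belief Ω) (ξ : Hist Ω) (l : ℕ) :
    padHist μ ξ (l + 1) =
      padHist μ ((SPExp.triv (lastBelief μ ξ), lastBelief μ ξ) :: ξ) l := by
  simp [padHist, lastBelief_cons, List.replicate_succ']

theorem padHist_append_singleton (μ p : Belief Ω) (e : SPExp Ω) (ξ : Hist Ω) (l : ℕ) :
    padHist μ (ξ ++ [(e, p)]) l = padHist p ξ l ++ [(e, p)] := by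
  rw [padHist, padHist, lastBelief_append_singleton, List.append_assoc]

theorem lastBelief_padHist (μ : Belief Ω) (ξ : Hist Ω) (l : ℕ) :
    lastBelief μ (padHist μ ξ l) = lastBelief μ ξ := by
  cases l <;> rfl

end Histories

section Persuasion

variable {Ω : Type*} [Fintype Ω] {F : Set (SPExp Ω)} {μ : Belief Ω}

def Superharmonic (F : Set (SPExp Ω)) (g : Belief Ω → ℝ) : Prop :=
  ∀ e ∈ F, e.expect g ≤ g e.sigma

theorem superharmonic_const (F : Set (SPExp Ω)) (c : ℝ) : Superharmonic F fun _ => c :=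
  fun e _ => (e.expect_const c).le

theorem histExp_mono (S : SeqP F μ) {g g' : Hist Ω → ℝ} (h : ∀ ξ, g ξ ≤ g' ξ) :
    ∀ n ξ, histExp S g n ξ ≤ histExp S g' n ξ
  | 0, ξ => h ξ
  | n + 1, _ => SPExp.expect_mono _ fun _ => histExp_mono S h n _

theorem histExp_le_of_superharmonic (S : SeqP F μ) {g : Belief Ω → ℝ}
    (hg : Superharmonic F g) :
    ∀ n ξ, histExp S (fun ζ => g (lastBelief μ ζ)) n ξ ≤ g (lastBelief μ ξ)
  | 0, ξ => le_rfl
  | n + 1, ξ =>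
    calc histExp S (fun ζ => g (lastBelief μ ζ)) (n + 1) ξ
        ≤ (S.next ξ).expect g :=
          SPExp.expect_mono _ fun _ => histExp_le_of_superharmonic S hg n _
      _ ≤ g (S.next ξ).sigma := hg _ (S.feasible ξ)
      _ = g (lastBelief μ ξ) := by rw [S.bayes]

def terminalPayoff (v : Belief Ω → ℝ) (S : SeqP F μ) (ξ : Hist Ω) : ℝ :=
  if TerminatesAfter S ξ then v (lastBelief μ ξ) else 0

theorem infUtility_eq_iSup (v : Belief Ω → ℝ) (S : SeqP F μ) :
    infUtility v S = ⨆ n, histExp S (terminalPayoff v S) n [] := rfl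

variable {v : Belief Ω → ℝ}

theorem terminalPayoff_nonneg (hv0 : ∀ q, 0 ≤ v q) (S : SeqP F μ) (ξ : Hist Ω) :
    0 ≤ terminalPayoff v S ξ := by
  unfold terminalPayoff
  split_ifs
  exacts [hv0 _, le_rfl]

theorem terminalPayoff_le (hv0 : ∀ q, 0 ≤ v q) (S : SeqP F μ) (ξ : Hist Ω) :
    terminalPayoff v S ξ ≤ v (lastBelief μ ξ) := by
  unfold terminalPayoff
  split_ifs
  exacts [le_rfl, hv0 _]

theorem TerminatesAfter.cons_triv {S : SeqP F μ} {ξ : Hist Ω} (h : TerminatesAfter S ξ) :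
    TerminatesAfter S ((SPExp.triv (lastBelief μ ξ), lastBelief μ ξ) :: ξ) := fun l => by
  rw [lastBelief_cons, ← padHist_succ]
  exact h (l + 1)

/-- A terminated history keeps its payoff one step later; any other one has payoff `0`. -/
theorem histExp_terminalPayoff_le_succ (hv0 : ∀ q, 0 ≤ v q) (S : SeqP F μ) :
    ∀ n ξ, histExp S (terminalPayoff v S) n ξ ≤ histExp S (terminalPayoff v S) (n + 1) ξ
  | 0, ξ => by
    by_cases h : TerminatesAfter S ξ
    · change terminalPayoff v S ξ ≤ (S.next ξ).expect _
      rw [show S.next ξ = SPExp.triv (lastBelief μ ξ) from h 0, SPExp.expect_triv]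
      simp only [histExp, terminalPayoff, if_pos h, if_pos h.cons_triv, lastBelief_cons, le_rfl]
    · rw [histExp, terminalPayoff, if_neg h]
      exact SPExp.expect_nonneg _ fun _ => terminalPayoff_nonneg hv0 S _
  | n + 1, ξ => SPExp.expect_mono _ fun _ => histExp_terminalPayoff_le_succ hv0 S n _

theorem monotone_histExp_terminalPayoff (hv0 : ∀ q, 0 ≤ v q) (S : SeqP F μ) (ξ : Hist Ω) :
    Monotone fun n => histExp S (terminalPayoff v S) n ξ :=
  monotone_nat_of_le_succ fun n => histExp_terminalPayoff_le_succ hv0 S n ξ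

theorem bddAbove_histExp_terminalPayoff (hv0 : ∀ q, 0 ≤ v q) {C : ℝ} (hv : ∀ q, v q ≤ C)
    (S : SeqP F μ) : BddAbove (Set.range fun n => histExp S (terminalPayoff v S) n []) :=
  ⟨C, Set.forall_mem_range.2 fun n =>
    (histExp_mono S (fun ξ => (terminalPayoff_le hv0 S ξ).trans (hv _)) n []).trans
      (histExp_le_of_superharmonic S (superharmonic_const F C) n [])⟩

theorem infUtility_le_of_superharmonic (hv0 : ∀ q, 0 ≤ v q) {g : Belief Ω → ℝ}
    (hvg : ∀ q, v q ≤ g q) (hg : Superharmonic F g) (S : SeqP F μ) : infUtility v S ≤ g μ :=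
  ciSup_le fun n =>
    (histExp_mono S (fun ξ => (terminalPayoff_le hv0 S ξ).trans (hvg _)) n []).trans
      (histExp_le_of_superharmonic S hg n [])

namespace SeqP

def halt (hTF : Trivials Ω ⊆ F) (μ : Belief Ω) : SeqP F μ where
  next ξ := SPExp.triv (lastBelief μ ξ)
  feasible _ := hTF ⟨_, rfl⟩
  bayes _ := SPExp.sigma_triv _

theorem terminatesAfter_halt (hTF : Trivials Ω ⊆ F) (ξ : Hist Ω) :
    TerminatesAfter (halt hTF μ) ξ := fun l => by
  simp only [halt, lastBelief_padHist]

/-- Histories are stored newest first, so the step taken by `e` is the last entry. -/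
def bind (e : SPExp Ω) (he : e ∈ F) (Sf : ∀ p, SeqP F p) : SeqP F e.sigma where
  next ξ := if h : ξ = [] then e else (Sf (ξ.getLast h).2).next ξ.dropLast
  feasible ξ := by
    split
    exacts [he, (Sf _).feasible _]
  bayes ξ := by
    split
    · next h => rw [h]; rfl
    · next h => rw [(Sf _).bayes, lastBelief_dropLast _ h]

variable {e : SPExp Ω} {he : e ∈ F} {Sf : ∀ p, SeqP F p}

theorem bind_next_nil : (bind e he Sf).next [] = e := rfl

theorem bind_next_append_singleton (ξ : Hist Ω) (x : SPExp Ω × Belief Ω) :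
    (bind e he Sf).next (ξ ++ [x]) = (Sf x.2).next ξ := by
  change dite _ _ _ = _
  rw [dif_neg (List.append_ne_nil_of_right_ne_nil ξ (List.cons_ne_nil x [])),
    List.getLast_append_singleton, List.dropLast_concat]

theorem terminatesAfter_bind_iff (ξ : Hist Ω) (p : Belief Ω) :
    TerminatesAfter (bind e he Sf) (ξ ++ [(e, p)]) ↔ TerminatesAfter (Sf p) ξ := by
  simp only [TerminatesAfter, padHist_append_singleton, bind_next_append_singleton,
    lastBelief_append_singleton]

theorem histExp_bind_append_singleton (g : Hist Ω → ℝ) (p : Belief Ω) :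
    ∀ n ξ, histExp (bind e he Sf) g n (ξ ++ [(e, p)]) =
      histExp (Sf p) (fun ζ => g (ζ ++ [(e, p)])) n ξ
  | 0, _ => rfl
  | n + 1, ξ => by
    simp only [histExp, bind_next_append_singleton]
    exact Finset.sum_congr rfl fun q _ => congrArg _
      (histExp_bind_append_singleton g p n (((Sf p).next ξ, q) :: ξ))

theorem histExp_terminalPayoff_bind_succ (n : ℕ) :
    histExp (bind e he Sf) (terminalPayoff v (bind e he Sf)) (n + 1) [] =
      e.expect fun p => histExp (Sf p) (terminalPayoff v (Sf p)) n [] := by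
  simp only [histExp, bind_next_nil]
  refine Finset.sum_congr rfl fun p _ => congrArg _ ?_
  refine (histExp_bind_append_singleton _ p n []).trans (congrArg (histExp _ · n []) ?_)
  ext ζ
  simp only [terminalPayoff, terminatesAfter_bind_iff, lastBelief_append_singleton]

theorem infUtility_bind (hv0 : ∀ q, 0 ≤ v q) {C : ℝ} (hv : ∀ q, v q ≤ C) :
    infUtility v (bind e he Sf) = e.expect fun p => infUtility v (Sf p) := by
  rw [infUtility_eq_iSup, ← Monotone.ciSup_comp_tendsto_atTop_of_linearOrder
    (monotone_histExp_terminalPayoff hv0 _ []) (tendsto_add_atTop_nat 1)]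
  simp only [histExp_terminalPayoff_bind_succ, infUtility_eq_iSup]
  exact (SPExp.expect_ciSup e (fun p => monotone_histExp_terminalPayoff hv0 _ [])
    fun p => bddAbove_histExp_terminalPayoff hv0 hv _).symm

end SeqP

theorem vInf_le_of_superharmonic (hTF : Trivials Ω ⊆ F) (hv0 : ∀ q, 0 ≤ v q)
    {g : Belief Ω → ℝ} (hvg : ∀ q, v q ≤ g q) (hg : Superharmonic F g) (p : Belief Ω) :
    vInf F v p ≤ g p :=
  have : Nonempty (SeqP F p) := ⟨SeqP.halt hTF p⟩
  ciSup_le (infUtility_le_of_superharmonic hv0 hvg hg)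

theorem bddAbove_range_infUtility (hv0 : ∀ q, 0 ≤ v q) {C : ℝ} (hv : ∀ q, v q ≤ C)
    (p : Belief Ω) : BddAbove (Set.range fun S : SeqP F p => infUtility v S) :=
  ⟨C, Set.forall_mem_range.2 (infUtility_le_of_superharmonic hv0 hv (superharmonic_const F C))⟩

theorem le_vInf (hTF : Trivials Ω ⊆ F) (hv0 : ∀ q, 0 ≤ v q) {C : ℝ} (hv : ∀ q, v q ≤ C)
    (p : Belief Ω) : v p ≤ vInf F v p :=
  calc v p = histExp (SeqP.halt hTF p) (terminalPayoff v (SeqP.halt hTF p)) 0 [] :=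
        (if_pos (SeqP.terminatesAfter_halt hTF [])).symm
    _ ≤ infUtility v (SeqP.halt hTF p) := le_ciSup (bddAbove_histExp_terminalPayoff hv0 hv _) 0
    _ ≤ vInf F v p := le_ciSup (bddAbove_range_infUtility hv0 hv p) _

theorem superharmonic_vInf (hTF : Trivials Ω ⊆ F) (hv0 : ∀ q, 0 ≤ v q) {C : ℝ}
    (hv : ∀ q, v q ≤ C) : Superharmonic F (vInf F v) := by
  intro e he
  refine le_of_forall_pos_le_add fun ε hε => ?_
  have : ∀ q, Nonempty (SeqP F q) := fun q => ⟨SeqP.halt hTF q⟩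
  choose Sf hSf using fun p => exists_lt_of_lt_ciSup (sub_lt_self (vInf F v p) hε)
  calc e.expect (vInf F v) ≤ e.expect fun p => infUtility v (Sf p) + ε :=
        e.expect_mono fun p => by linarith [hSf p]
    _ = infUtility v (SeqP.bind e he Sf) + ε := by
        rw [SPExp.expect_add_const, SeqP.infUtility_bind hv0 hv]
    _ ≤ vInf F v e.sigma + ε := by
        gcongr
        exact le_ciSup (bddAbove_range_infUtility hv0 hv _) _

end Persuasion

end

theorem thm_limit_characterize_general {Ω : Type*} [Fintype Ω]
    (F : Set (SPExp Ω)) (hTF : Trivials Ω ⊆ F)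
    (v : Belief Ω → ℝ) (Vlo Vhi : ℝ) (hVlo : 0 < Vlo)
    (hvlo : ∀ p, Vlo ≤ v p) (hvhi : ∀ p, v p ≤ Vhi) :
    ∀ p : Belief Ω,
      vInf F v p =
        sInf {x : ℝ | ∃ g : Belief Ω → ℝ,
          (∀ q, v q ≤ g q) ∧
          (∀ e ∈ F, SPExp.expect e g ≤ g (SPExp.sigma e)) ∧
          x = g p} := by
  intro p
  have hv0 : ∀ q, 0 ≤ v q := fun q => hVlo.le.trans (hvlo q)
  have hvInf_mem : vInf F v p ∈ {x : ℝ | ∃ g : Belief Ω → ℝ, (∀ q, v q ≤ g q) ∧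
      (∀ e ∈ F, SPExp.expect e g ≤ g (SPExp.sigma e)) ∧ x = g p} :=
    ⟨vInf F v, le_vInf hTF hv0 hvhi, superharmonic_vInf hTF hv0 hvhi, rfl⟩
  refine le_antisymm (le_csInf ⟨_, hvInf_mem⟩ ?_) (csInf_le ⟨0, ?_⟩ hvInf_mem)
  · rintro _ ⟨g, hvg, hg, rfl⟩
    exact vInf_le_of_superharmonic hTF hv0 hvg hg p
  · rintro _ ⟨g, hvg, -, rfl⟩
    exact (hv0 p).trans (hvg p)

/-- Theorem 1 (thm-limit-characterize): v_∞(p) = inf{g(p) ; g ∈ G}. -/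
theorem thm_limit_characterize {Ω : Type*} [Fintype Ω] [Nonempty Ω]
    (F : Set (SPExp Ω)) (hTF : Trivials Ω ⊆ F)
    (v : Belief Ω → ℝ) (Vlo Vhi : ℝ) (hVlo : 0 < Vlo) (hVV : Vlo ≤ Vhi)
    (hvlo : ∀ p, Vlo ≤ v p) (hvhi : ∀ p, v p ≤ Vhi)
    (husc : UpperSemicontinuous v) :
    ∀ p : Belief Ω,
      vInf F v p =
        sInf {x : ℝ | ∃ g : Belief Ω → ℝ,
          (∀ q, v q ≤ g q) ∧
          (∀ e ∈ F, SPExp.expect e g ≤ g (SPExp.sigma e)) ∧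
          x = g p} :=
  thm_limit_characterize_general F hTF v Vlo Vhi hVlo hvlo hvhi
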